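/- arXiv:1809.07020 — 2 statements merged into one kernel-verified Lean document; each statement's English description precedes it below -/
import Mathlib

section
/- Discrete Picone inequality: Let p > 1 and let a, b ≥ 0 and c, d > 0 be real numbers. Then |c - d|^(p-2)(c - d)(a^p / c^(p-1) - b^p / d^(p-1)) ≤ |a - b|^p. -/
/-!
Jensen's inequality for `t ↦ t ^ p` with weights `y i / ∑ y` at the points `x i / y i` is Radon's
inequality `(∑ x) ^ p / (∑ y) ^ (p - 1) ≤ ∑ x ^ p / y ^ (p - 1)`. For `d < c`, apply it to
`a ≤ |a - b| + b` and `c = (c - d) + d`: this bounds `a ^ p / c ^ (p - 1) - b ^ p / d ^ (p - 1)`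
by `|a - b| ^ p / (c - d) ^ (p - 1)`. The case `c < d` is the same after swapping `(a, c)` with
`(b, d)`, and for `c = d` the left-hand side vanishes.
-/

open Finset

theorem Real.rpow_sum_div_le_sum_rpow_div {ι : Type*} (s : Finset ι) {p : ℝ} (hp : 1 ≤ p)
    {x y : ι → ℝ} (hx : ∀ i ∈ s, 0 ≤ x i) (hy : ∀ i ∈ s, 0 < y i) :
    (∑ i ∈ s, x i) ^ p / (∑ i ∈ s, y i) ^ (p - 1) ≤ ∑ i ∈ s, x i ^ p / y i ^ (p - 1) := by
  rcases s.eq_empty_or_nonempty with rfl | hs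
  · simp [Real.zero_rpow (by linarith : p ≠ 0)]
  set Y := ∑ i ∈ s, y i
  have hY : 0 < Y := sum_pos hy hs
  have hX : 0 ≤ ∑ i ∈ s, x i := sum_nonneg hx
  have jensen := (convexOn_rpow hp).map_sum_le (t := s) (w := fun i ↦ y i / Y)
    (p := fun i ↦ x i / y i) (fun i hi ↦ (div_pos (hy i hi) hY).le)
    (by rw [← sum_div, div_self hY.ne'])
    (fun i hi ↦ Set.mem_Ici.2 (div_nonneg (hx i hi) (hy i hi).le))
  simp only [smul_eq_mul] at jensen
  have hmean : ∑ i ∈ s, y i / Y * (x i / y i) = (∑ i ∈ s, x i) / Y := by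
    rw [sum_div]
    refine sum_congr rfl fun i hi ↦ ?_
    field_simp [(hy i hi).ne']
  have hterm : ∀ i ∈ s, y i / Y * (x i / y i) ^ p = x i ^ p / y i ^ (p - 1) / Y := by
    intro i hi
    rw [Real.div_rpow (hx i hi) (hy i hi).le, Real.rpow_sub_one (hy i hi).ne']
    field_simp
  rw [hmean, sum_congr rfl hterm, ← sum_div, Real.div_rpow hX hY.le, le_div_iff₀ hY] at jensen
  rwa [Real.rpow_sub_one hY.ne', div_div_eq_mul_div, mul_div_right_comm]

theorem Real.rpow_sub_two_mul_self {x : ℝ} (hx : 0 < x) (p : ℝ) :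
    x ^ (p - 2) * x = x ^ (p - 1) := by
  rw [← Real.rpow_add_one hx.ne']
  ring_nf

theorem discrete_picone_of_lt {p a b c d : ℝ} (hp : 1 ≤ p) (ha : 0 ≤ a) (hb : 0 ≤ b)
    (hd : 0 < d) (hdc : d < c) :
    (c - d) ^ (p - 1) * (a ^ p / c ^ (p - 1) - b ^ p / d ^ (p - 1)) ≤ |a - b| ^ p := by
  have hc : 0 < c := hd.trans hdc
  have hcd : 0 < c - d := sub_pos.2 hdc
  have radon := Real.rpow_sum_div_le_sum_rpow_div univ hp (x := ![|a - b|, b]) (y := ![c - d, d])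
    (by simp [Fin.forall_fin_two, hb]) (by simp [Fin.forall_fin_two, hcd, hd])
  simp only [Fin.sum_univ_two, Matrix.cons_val_zero, Matrix.cons_val_one, sub_add_cancel] at radon
  have ha_le : a ^ p / c ^ (p - 1) ≤ (|a - b| + b) ^ p / c ^ (p - 1) := by
    gcongr
    linarith [le_abs_self (a - b)]
  have key : a ^ p / c ^ (p - 1) - b ^ p / d ^ (p - 1) ≤ |a - b| ^ p / (c - d) ^ (p - 1) := by
    linarith
  rwa [le_div_iff₀' (Real.rpow_pos_of_pos hcd _)] at key

/-- discrete Picone inequality: for `p > 1`, `a, b ≥ 0`, `c, d > 0`,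
`|c - d|^(p-2) (c - d) (a^p/c^(p-1) - b^p/d^(p-1)) ≤ |a - b|^p`
(real exponentiation is `Real.rpow`, so `|0|^(p-2)·0 = 0`). -/
theorem stmt12 (p a b c d : ℝ) (hp : 1 < p) (ha : 0 ≤ a) (hb : 0 ≤ b)
    (hc : 0 < c) (hd : 0 < d) :
    |c - d| ^ (p - 2) * (c - d) * (a ^ p / c ^ (p - 1) - b ^ p / d ^ (p - 1)) ≤
      |a - b| ^ p := by
  rcases lt_trichotomy c d with hcd | rfl | hdc
  · calc |c - d| ^ (p - 2) * (c - d) * (a ^ p / c ^ (p - 1) - b ^ p / d ^ (p - 1))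
        = (d - c) ^ (p - 1) * (b ^ p / d ^ (p - 1) - a ^ p / c ^ (p - 1)) := by
          rw [abs_of_neg (sub_neg.2 hcd), neg_sub,
            ← Real.rpow_sub_two_mul_self (sub_pos.2 hcd)]
          ring
      _ ≤ |b - a| ^ p := discrete_picone_of_lt hp.le hb ha hc hcd
      _ = |a - b| ^ p := by rw [abs_sub_comm]
  · simp only [sub_self, mul_zero, zero_mul]
    positivity
  · rw [abs_of_pos (sub_pos.2 hdc), Real.rpow_sub_two_mul_self (sub_pos.2 hdc)]
    exact discrete_picone_of_lt hp.le ha hb hd hdc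
end

section
/- Let h ∈ W̃_p with |{h > 0}| > 0 and let (λ, u) be an eigenpair of (-Δ)ₚˢ u = λ h|u|^(p-2)u with λ > λ₁ and u sign-changing. Then ∫_Ω h(x) u₊(x)^p dx > 0 and ∫_Ω h(x) u₋(x)^p dx > 0. -/
open MeasureTheory Metric Set Filter

noncomputable section

/-- The Gagliardo `p`-energy `‖u‖^p = ∫∫ |u(x)-u(y)|^p / |x-y|^{N+sp} dx dy`. -/
def gagE (N : ℕ) (s p : ℝ) (u : EuclideanSpace ℝ (Fin N) → ℝ) : ℝ :=
  ∫ x, ∫ y, |u x - u y| ^ p / ‖x - y‖ ^ ((N : ℝ) + s * p)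

/-- The Gagliardo norm of `W₀^{s,p}`. -/
def gagNorm (N : ℕ) (s p : ℝ) (u : EuclideanSpace ℝ (Fin N) → ℝ) : ℝ :=
  gagE N s p u ^ (1 / p)

/-- Membership in `W₀^{s,p}(Ω)`: measurable, finite Gagliardo energy, vanishing outside `Ω`. -/
def memW0 (N : ℕ) (s p : ℝ) (Ω : Set (EuclideanSpace ℝ (Fin N)))
    (u : EuclideanSpace ℝ (Fin N) → ℝ) : Prop :=
  Measurable u ∧
  Integrable (fun z : EuclideanSpace ℝ (Fin N) × EuclideanSpace ℝ (Fin N) =>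
    |u z.1 - u z.2| ^ p / ‖z.1 - z.2‖ ^ ((N : ℝ) + s * p)) ∧
  ∀ x, x ∉ Ω → u x = 0

/-- The fractional `p`-Laplacian pairing `⟨A u, v⟩`. -/
def fracPair (N : ℕ) (s p : ℝ) (u v : EuclideanSpace ℝ (Fin N) → ℝ) : ℝ :=
  ∫ x, ∫ y, |u x - u y| ^ (p - 2) * (u x - u y) * (v x - v y) / ‖x - y‖ ^ ((N : ℝ) + s * p)

/-- `q` is below the critical exponent `p*ₛ = Np/(N-sp)` (`= ∞` if `sp ≥ N`). -/
def subCrit (N : ℕ) (s p q : ℝ) : Prop :=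
  s * p < N → q < N * p / ((N : ℝ) - s * p)

/-- The class `W_q`: `h ρ^{sa} ∈ L^r(Ω)` for some `a ∈ [0,q)`, `r ∈ (1,∞)` with
`1/r + a/p + (q-a)/p*ₛ < 1` (the last term read as `0` when `p*ₛ = ∞`). -/
def inWq (N : ℕ) (Ω : Set (EuclideanSpace ℝ (Fin N))) (s p q : ℝ)
    (h : EuclideanSpace ℝ (Fin N) → ℝ) : Prop :=
  ∃ a r : ℝ, 0 ≤ a ∧ a < q ∧ 1 < r ∧
    ((s * p < N ∧ 1 / r + a / p + (q - a) * ((N : ℝ) - s * p) / ((N : ℝ) * p) < 1) ∨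
      (¬ s * p < N ∧ 1 / r + a / p < 1)) ∧
    IntegrableOn (fun x => |h x * infDist x (frontier Ω) ^ (s * a)| ^ r) Ω

/-- The class `W̃_q`: `h ρ^{sa} ∈ L^r(Ω)` for some `a ∈ [0,1]`, `r ∈ (1,∞)` with
`1/r + a/p + (max{p,q}-a)/p*ₛ < 1`. -/
def inWtq (N : ℕ) (Ω : Set (EuclideanSpace ℝ (Fin N))) (s p q : ℝ)
    (h : EuclideanSpace ℝ (Fin N) → ℝ) : Prop :=
  ∃ a r : ℝ, 0 ≤ a ∧ a ≤ 1 ∧ 1 < r ∧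
    ((s * p < N ∧
        1 / r + a / p + (max p q - a) * ((N : ℝ) - s * p) / ((N : ℝ) * p) < 1) ∨
      (¬ s * p < N ∧ 1 / r + a / p < 1)) ∧
    IntegrableOn (fun x => |h x * infDist x (frontier Ω) ^ (s * a)| ^ r) Ω

/-- Weak convergence `uₙ ⇀ u` in `W₀^{s,p}(Ω)`: bounded Gagliardo norms together with
convergence against all continuous compactly supported test functions (a total family in
the dual `W^{-s,p'}(Ω)`). -/
def weakConv (N : ℕ) (s p : ℝ) (u_ : ℕ → EuclideanSpace ℝ (Fin N) → ℝ)
    (u : EuclideanSpace ℝ (Fin N) → ℝ) : Prop :=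
  (∃ M : ℝ, ∀ n, gagNorm N s p (u_ n) ≤ M) ∧
  ∀ φ : EuclideanSpace ℝ (Fin N) → ℝ, Continuous φ → HasCompactSupport φ →
    Tendsto (fun n => ∫ x, u_ n x * φ x) atTop (nhds (∫ x, u x * φ x))

/-- The first eigenvalue `λ₁ = inf{‖u‖^p : u ∈ W₀^{s,p}(Ω), ∫_Ω h|u|^p = 1}`. -/
def lam1 (N : ℕ) (s p : ℝ) (Ω : Set (EuclideanSpace ℝ (Fin N)))
    (h : EuclideanSpace ℝ (Fin N) → ℝ) : ℝ :=
  sInf {t : ℝ | ∃ u, memW0 N s p Ω u ∧ (∫ x in Ω, h x * |u x| ^ p) = 1 ∧ t = gagE N s p u}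

/-- `(λ, u)` is an eigenpair of `(-Δ)ₚˢ u = λ h |u|^{p-2} u` in `Ω`, `u = 0` outside `Ω`. -/
def isEigenpair (N : ℕ) (s p : ℝ) (Ω : Set (EuclideanSpace ℝ (Fin N)))
    (h : EuclideanSpace ℝ (Fin N) → ℝ) (lam : ℝ)
    (u : EuclideanSpace ℝ (Fin N) → ℝ) : Prop :=
  memW0 N s p Ω u ∧ ¬ (∀ᵐ x ∂volume.restrict Ω, u x = 0) ∧
  ∀ v, memW0 N s p Ω v →
    fracPair N s p u v = lam * ∫ x in Ω, h x * |u x| ^ (p - 2) * u x * v x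


private lemma rpow_sq_helper {p : ℝ} (hp : 1 < p) {t : ℝ} (ht : 0 ≤ t) :
    t ^ (p - 2) * t * t = t ^ p := by
  rcases ht.eq_or_lt with rfl | h
  · simp [Real.zero_rpow (show p ≠ 0 by linarith)]
  · have h1 := Real.rpow_add h (p - 2) 1
    have h2 := Real.rpow_add h (p - 1) 1
    rw [Real.rpow_one] at h1 h2
    rw [show p - 2 + 1 = p - 1 by ring] at h1
    rw [show p - 1 + 1 = p by ring] at h2
    rw [h2, h1]

private lemma div_le_div_nn {a b c : ℝ} (hab : a ≤ b) (hc : 0 ≤ c) : a / c ≤ b / c := by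
  rcases hc.eq_or_lt with rfl | h
  · simp
  · gcongr

private lemma ptwise_le {p : ℝ} (hp : 1 < p) {a b : ℝ} (hba : b ≤ a) :
    |max a 0 - max b 0| ^ p ≤ |a - b| ^ (p - 2) * (a - b) * (max a 0 - max b 0) := by
  have hd0 : 0 ≤ max a 0 - max b 0 := sub_nonneg.2 (max_le_max hba le_rfl)
  have hc0 : 0 ≤ a - b := sub_nonneg.2 hba
  have hdc : max a 0 - max b 0 ≤ a - b := by
    have := abs_max_sub_max_le_abs a b 0
    rwa [abs_of_nonneg hd0, abs_of_nonneg hc0] at this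
  rw [abs_of_nonneg hd0, abs_of_nonneg hc0]
  rcases hc0.eq_or_lt with hc | hc
  · have hd : max a 0 - max b 0 = 0 := le_antisymm (by rw [← hc] at hdc; exact hdc) hd0
    rw [hd, ← hc, Real.zero_rpow (show p ≠ 0 by linarith)]
    simp
  · rcases hd0.eq_or_lt with hd | hd
    · rw [← hd, Real.zero_rpow (show p ≠ 0 by linarith)]
      simp
    · have e1 : (a - b) ^ (p - 2) * (a - b) = (a - b) ^ (p - 1) := by
        have := Real.rpow_add hc (p - 2) 1
        rw [Real.rpow_one, show p - 2 + 1 = p - 1 by ring] at this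
        exact this.symm
      have e2 : (max a 0 - max b 0) ^ p = (max a 0 - max b 0) ^ (p - 1) * (max a 0 - max b 0) := by
        have := Real.rpow_add hd (p - 1) 1
        rw [Real.rpow_one, show p - 1 + 1 = p by ring] at this
        exact this
      rw [e1, e2]
      exact mul_le_mul_of_nonneg_right (Real.rpow_le_rpow hd0 hdc (by linarith)) hd0

private lemma ptwise {p : ℝ} (hp : 1 < p) (a b : ℝ) :
    |max a 0 - max b 0| ^ p ≤ |a - b| ^ (p - 2) * (a - b) * (max a 0 - max b 0) := by
  rcases le_total b a with hba | hab
  · exact ptwise_le hp hba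
  · calc |max a 0 - max b 0| ^ p = |max b 0 - max a 0| ^ p := by rw [abs_sub_comm]
      _ ≤ |b - a| ^ (p - 2) * (b - a) * (max b 0 - max a 0) := ptwise_le hp hab
      _ = |a - b| ^ (p - 2) * (a - b) * (max a 0 - max b 0) := by
          rw [abs_sub_comm b a]; ring

private lemma lam1_nonneg (N : ℕ) (s p : ℝ) (Ω : Set (EuclideanSpace ℝ (Fin N)))
    (h : EuclideanSpace ℝ (Fin N) → ℝ) : 0 ≤ lam1 N s p Ω h := by
  apply Real.sInf_nonneg
  rintro t ⟨v, -, -, rfl⟩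
  unfold gagE
  apply integral_nonneg
  intro x
  apply integral_nonneg
  intro y
  positivity

private lemma neg_eig {N : ℕ} {Ω : Set (EuclideanSpace ℝ (Fin N))} {s p : ℝ}
    {h : EuclideanSpace ℝ (Fin N) → ℝ} {lam : ℝ}
    {u : EuclideanSpace ℝ (Fin N) → ℝ}
    (heig : isEigenpair N s p Ω h lam u) :
    isEigenpair N s p Ω h lam (fun x => -u x) := by
  obtain ⟨⟨hm, hi, hz⟩, hnz, hw⟩ := heig
  refine ⟨⟨hm.neg, ?_, fun x hx => by simp [hz x hx]⟩, ?_, ?_⟩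
  · refine hi.congr (Filter.EventuallyEq.symm (Filter.eventuallyEq_of_mem Filter.univ_mem ?_))
    intro z _
    dsimp only
    rw [show -u z.1 - -u z.2 = -(u z.1 - u z.2) by ring, abs_neg]
  · intro hcon
    exact hnz (hcon.mono fun x hx => by simpa using hx)
  · intro v hv
    have base := hw v hv
    have e1 : fracPair N s p (fun x => -u x) v = -fracPair N s p u v := by
      unfold fracPair
      rw [← integral_neg]
      refine integral_congr_ae (Filter.Eventually.of_forall fun x => ?_)
      dsimp only
      rw [← integral_neg]
      refine integral_congr_ae (Filter.Eventually.of_forall fun y => ?_)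
      dsimp only
      rw [show -u x - -u y = -(u x - u y) by ring, abs_neg]
      ring
    have e2 : (∫ x in Ω, h x * |(-u x)| ^ (p - 2) * (-u x) * v x)
        = -∫ x in Ω, h x * |u x| ^ (p - 2) * u x * v x := by
      rw [← integral_neg]
      refine integral_congr_ae (Filter.Eventually.of_forall fun x => ?_)
      dsimp only
      rw [abs_neg]; ring
    dsimp only
    rw [e1, base, e2]
    ring

private lemma main_pos (N : ℕ) (Ω : Set (EuclideanSpace ℝ (Fin N)))
    (s p : ℝ) (hp : 1 < p)
    (h : EuclideanSpace ℝ (Fin N) → ℝ) (lam : ℝ)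
    (u : EuclideanSpace ℝ (Fin N) → ℝ)
    (heig : isEigenpair N s p Ω h lam u) (hlam0 : 0 < lam)
    (h1 : ¬ (∀ᵐ x ∂volume.restrict Ω, max (u x) 0 = 0))
    (h2 : ¬ (∀ᵐ x ∂volume.restrict Ω, max (-u x) 0 = 0)) :
    0 < ∫ x in Ω, h x * max (u x) 0 ^ p := by
  obtain ⟨⟨hum, hui, huz⟩, -, hw⟩ := heig
  set up : EuclideanSpace ℝ (Fin N) → ℝ := fun x => max (u x) 0 with hup
  have hupm : Measurable up := hum.max measurable_const
  have mD : Measurable fun z : EuclideanSpace ℝ (Fin N) × EuclideanSpace ℝ (Fin N) =>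
      u z.1 - u z.2 := (hum.comp measurable_fst).sub (hum.comp measurable_snd)
  have mDp : Measurable fun z : EuclideanSpace ℝ (Fin N) × EuclideanSpace ℝ (Fin N) =>
      up z.1 - up z.2 := (hupm.comp measurable_fst).sub (hupm.comp measurable_snd)
  have mK : Measurable fun z : EuclideanSpace ℝ (Fin N) × EuclideanSpace ℝ (Fin N) =>
      ‖z.1 - z.2‖ ^ ((N : ℝ) + s * p) :=
    ((continuous_fst.sub continuous_snd).norm.measurable).pow_const _
  have hKnn : ∀ z : EuclideanSpace ℝ (Fin N) × EuclideanSpace ℝ (Fin N),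
      0 ≤ ‖z.1 - z.2‖ ^ ((N : ℝ) + s * p) := fun z => Real.rpow_nonneg (norm_nonneg _) _
  set G : EuclideanSpace ℝ (Fin N) × EuclideanSpace ℝ (Fin N) → ℝ :=
    fun z => |u z.1 - u z.2| ^ p / ‖z.1 - z.2‖ ^ ((N : ℝ) + s * p) with hG
  set Gp : EuclideanSpace ℝ (Fin N) × EuclideanSpace ℝ (Fin N) → ℝ :=
    fun z => |up z.1 - up z.2| ^ p / ‖z.1 - z.2‖ ^ ((N : ℝ) + s * p) with hGp
  set F : EuclideanSpace ℝ (Fin N) × EuclideanSpace ℝ (Fin N) → ℝ :=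
    fun z => |u z.1 - u z.2| ^ (p - 2) * (u z.1 - u z.2) * (up z.1 - up z.2) /
      ‖z.1 - z.2‖ ^ ((N : ℝ) + s * p) with hF
  have hGi : Integrable G volume := hui
  have hGpm : Measurable Gp := ((mDp.abs.pow_const _)).div mK
  have hFm : Measurable F := (((mD.abs.pow_const _).mul mD).mul mDp).div mK
  have habs : ∀ z : EuclideanSpace ℝ (Fin N) × EuclideanSpace ℝ (Fin N),
      |up z.1 - up z.2| ≤ |u z.1 - u z.2| := fun z => abs_max_sub_max_le_abs _ _ _
  have hGple : ∀ z, Gp z ≤ G z := fun z =>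
    div_le_div_nn (Real.rpow_le_rpow (abs_nonneg _) (habs z) (by linarith)) (hKnn z)
  have hGpnn : ∀ z, 0 ≤ Gp z := fun z =>
    div_nonneg (Real.rpow_nonneg (abs_nonneg _) _) (hKnn z)
  have hGnn : ∀ z, 0 ≤ G z := fun z =>
    div_nonneg (Real.rpow_nonneg (abs_nonneg _) _) (hKnn z)
  have hGpi : Integrable Gp volume := by
    refine hGi.mono' hGpm.aestronglyMeasurable (Filter.Eventually.of_forall fun z => ?_)
    rw [Real.norm_eq_abs, abs_of_nonneg (hGpnn z)]
    exact hGple z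
  have hFle : ∀ z, |F z| ≤ G z := by
    intro z
    have hnum : |(|u z.1 - u z.2|) ^ (p - 2) * (u z.1 - u z.2) * (up z.1 - up z.2)|
        ≤ |u z.1 - u z.2| ^ p := by
      calc |(|u z.1 - u z.2|) ^ (p - 2) * (u z.1 - u z.2) * (up z.1 - up z.2)|
          = |u z.1 - u z.2| ^ (p - 2) * |u z.1 - u z.2| * |up z.1 - up z.2| := by
            rw [abs_mul, abs_mul, abs_of_nonneg (Real.rpow_nonneg (abs_nonneg _) _)]
        _ ≤ |u z.1 - u z.2| ^ (p - 2) * |u z.1 - u z.2| * |u z.1 - u z.2| :=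
            mul_le_mul_of_nonneg_left (habs z)
              (mul_nonneg (Real.rpow_nonneg (abs_nonneg _) _) (abs_nonneg _))
        _ = |u z.1 - u z.2| ^ p := rpow_sq_helper hp (abs_nonneg _)
    have : |F z| = |(|u z.1 - u z.2|) ^ (p - 2) * (u z.1 - u z.2) * (up z.1 - up z.2)| /
        ‖z.1 - z.2‖ ^ ((N : ℝ) + s * p) := by
      rw [hF]
      dsimp only
      rw [abs_div, abs_of_nonneg (hKnn z)]
    rw [this]
    exact div_le_div_nn hnum (hKnn z)
  have hFi : Integrable F volume := by
    refine hGi.mono' hFm.aestronglyMeasurable (Filter.Eventually.of_forall fun z => ?_)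
    rw [Real.norm_eq_abs]
    exact hFle z
  have hkey : ∀ z, Gp z ≤ F z := fun z =>
    div_le_div_nn (ptwise hp (u z.1) (u z.2)) (hKnn z)
  have hupW : memW0 N s p Ω up :=
    ⟨hupm, hGpi, fun x hx => by rw [hup]; dsimp only; rw [huz x hx]; exact max_self 0⟩
  have heq := hw up hupW
  have hint_eq : (∫ x in Ω, h x * |u x| ^ (p - 2) * u x * up x)
      = ∫ x in Ω, h x * max (u x) 0 ^ p := by
    refine integral_congr_ae (Filter.Eventually.of_forall fun x => ?_)
    rcases le_or_gt (u x) 0 with hx | hx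
    · rw [hup]
      dsimp only
      rw [max_eq_right hx, Real.zero_rpow (show p ≠ 0 by linarith)]
      simp
    · rw [hup]
      dsimp only
      rw [max_eq_left hx.le, abs_of_pos hx]
      have e := rpow_sq_helper hp hx.le
      linear_combination h x * e
  rw [hint_eq] at heq
  have hFi' : Integrable (Function.uncurry fun x y : EuclideanSpace ℝ (Fin N) =>
      |u x - u y| ^ (p - 2) * (u x - u y) * (up x - up y) / ‖x - y‖ ^ ((N : ℝ) + s * p))
      (volume.prod volume) := by
    rw [← Measure.volume_eq_prod _ _]
    exact hFi
  have hfp : fracPair N s p u up = ∫ z, F z := by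
    unfold fracPair
    rw [integral_integral hFi', ← Measure.volume_eq_prod _ _]
  by_contra hcon
  push_neg at hcon
  have hle1 : ∫ z, Gp z ≤ ∫ z, F z := integral_mono hGpi hFi hkey
  have hnn : 0 ≤ ∫ z, Gp z := integral_nonneg hGpnn
  have hFval : ∫ z, F z ≤ 0 := by
    rw [← hfp, heq]
    nlinarith
  have hzero : ∫ z, Gp z = 0 := le_antisymm (hle1.trans hFval) hnn
  have hae0 : Gp =ᵐ[volume] (0 : EuclideanSpace ℝ (Fin N) × EuclideanSpace ℝ (Fin N) → ℝ) :=
    (integral_eq_zero_iff_of_nonneg hGpnn hGpi).mp hzero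
  rw [Measure.volume_eq_prod _ _] at hae0
  have hae1 := Measure.ae_ae_of_ae_prod hae0
  have hae2 : ∀ᵐ x ∂(volume : Measure (EuclideanSpace ℝ (Fin N))),
      ∀ᵐ y ∂(volume : Measure (EuclideanSpace ℝ (Fin N))), up y = up x := by
    filter_upwards [hae1] with x hx
    filter_upwards [hx] with y hy
    by_cases hxy : x = y
    · rw [hxy]
    · have hk : (0 : ℝ) < ‖x - y‖ ^ ((N : ℝ) + s * p) :=
        Real.rpow_pos_of_pos (by rw [norm_pos_iff]; exact sub_ne_zero_of_ne hxy) _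
      have hy' : |up x - up y| ^ p / ‖x - y‖ ^ ((N : ℝ) + s * p) = 0 := hy
      have hnum : |up x - up y| ^ p = 0 := by
        rcases div_eq_zero_iff.mp hy' with h' | h'
        · exact h'
        · exact absurd h' hk.ne'
      have : |up x - up y| = 0 :=
        (Real.rpow_eq_zero (abs_nonneg _) (show p ≠ 0 by linarith)).mp hnum
      have := abs_eq_zero.mp this
      linarith [sub_eq_zero.mp this]
  have h1' : ∃ᵐ x ∂volume.restrict Ω, ¬ max (u x) 0 = 0 := Filter.not_eventually.mp h1
  obtain ⟨x₀, hx₀ne, hx₀ae⟩ :=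
    (h1'.and_eventually (ae_restrict_of_ae hae2)).exists
  have hc : 0 < up x₀ := lt_of_le_of_ne (le_max_right _ _) (Ne.symm hx₀ne)
  have hfin : ∀ᵐ y ∂volume.restrict Ω, max (-u y) 0 = 0 := by
    refine ae_restrict_of_ae ?_
    filter_upwards [hx₀ae] with y hy
    have hypos : 0 < u y := by
      have h3 : 0 < up y := by rw [hy]; exact hc
      rcases le_or_gt (u y) 0 with h4 | h4
      · rw [hup] at h3
        dsimp only at h3
        rw [max_eq_right h4] at h3
        exact absurd h3 (lt_irrefl 0)
      · exact h4
    rw [max_eq_right (by linarith : -u y ≤ 0)]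
  exact h2 hfin

/-- for `h ∈ W̃_p` with `|{h > 0} ∩ Ω| > 0` and a sign-changing eigenpair
`(λ, u)` with `λ > λ₁`, both `∫_Ω h u₊^p > 0` and `∫_Ω h u₋^p > 0`. -/
theorem stmt14 (N : ℕ) (Ω : Set (EuclideanSpace ℝ (Fin N)))
    (hΩo : IsOpen Ω) (hΩc : IsConnected Ω) (hΩb : Bornology.IsBounded Ω)
    (s p : ℝ) (hs0 : 0 < s) (hs1 : s ≤ 1) (hp : 1 < p)
    (h : EuclideanSpace ℝ (Fin N) → ℝ) (hmeas : Measurable h)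
    (hW : inWtq N Ω s p p h)
    (hpos : 0 < volume {x ∈ Ω | 0 < h x})
    (lam : ℝ) (u : EuclideanSpace ℝ (Fin N) → ℝ)
    (heig : isEigenpair N s p Ω h lam u)
    (hlam : lam1 N s p Ω h < lam)
    (hsign : ¬ (∀ᵐ x ∂volume.restrict Ω, max (u x) 0 = 0) ∧
      ¬ (∀ᵐ x ∂volume.restrict Ω, max (-u x) 0 = 0)) :
    (0 < ∫ x in Ω, h x * max (u x) 0 ^ p) ∧
    (0 < ∫ x in Ω, h x * max (-u x) 0 ^ p) := by
  obtain ⟨h1, h2⟩ := hsign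
  have hl0 : 0 < lam := lt_of_le_of_lt (lam1_nonneg N s p Ω h) hlam
  constructor
  · exact main_pos N Ω s p hp h lam u heig hl0 h1 h2
  · have h1' : ¬ (∀ᵐ x ∂volume.restrict Ω, max (-(-u x)) 0 = 0) := by
      simpa using h1
    exact main_pos N Ω s p hp h lam (fun x => -u x) (neg_eig heig) hl0 h2 h1'


end
end
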